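/- arXiv:1304.5049 — 4 statements merged into one kernel-verified Lean document; each statement's English description precedes it below -/
import Mathlib

section
/- Every 2-connected graph on at least 4 vertices with no C_5-minor contains C_4 as a subgraph. -/
open SimpleGraph

/-- `H` is a minor of `G`: there is a family of nonempty, pairwise disjoint,
connected branch sets in `G`, one for each vertex of `H`, such that adjacent
vertices of `H` have adjacent branch sets. -/
def SimpleGraph.IsMinorOf {W V : Type*} (H : SimpleGraph W) (G : SimpleGraph V) : Prop :=
  ∃ f : W → Set V,
    (∀ w, (f w).Nonempty) ∧
    (∀ w, (G.induce (f w)).Connected) ∧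
    (Pairwise fun w₁ w₂ => Disjoint (f w₁) (f w₂)) ∧
    (∀ ⦃w₁ w₂⦄, H.Adj w₁ w₂ → ∃ v₁ ∈ f w₁, ∃ v₂ ∈ f w₂, G.Adj v₁ v₂)

/-- A graph is 2-connected if it has at least 3 vertices and deleting any
single vertex leaves a connected graph. -/
def SimpleGraph.TwoConnected {V : Type*} [Fintype V] (G : SimpleGraph V) : Prop :=
  3 ≤ Fintype.card V ∧ ∀ v : V, ((⊤ : G.Subgraph).deleteVerts {v}).coe.Connected

/-! A 2-connected graph on at least four vertices has a cycle of length at least four. For a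
vertex `a` with neighbours `x ≠ y`, a path from `x` to `y` in `G - a` closes a cycle through `a`;
if that cycle is only a triangle, some vertex `z` outside it is adjacent to a triangle vertex `t`,
and a path from `z` back to the triangle in `G - t`, stopped at the first triangle vertex it
meets, goes round the triangle into a cycle of length at least four.

A cycle of length `n ≥ k` has `C_k` as a minor: take `k - 1` of its vertices as singleton
branch sets and the remaining arc as the last one. With no `C_5`-minor, the long cycle therefore
has length exactly four.
-/

namespace Fin

lemma val_eq_succ_or_of_val_sub_eq_one {k : ℕ} {u v : Fin k} (h : (u - v).val = 1) :
    u.val = v.val + 1 ∨ (v.val + 1 = k ∧ u.val = 0) := by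
  rcases le_or_gt v u with hle | hlt
  · rw [Fin.coe_sub_iff_le.mpr hle] at h
    omega
  · rw [Fin.coe_sub_iff_lt.mpr hlt] at h
    omega

end Fin

namespace SimpleGraph

variable {V : Type*} {G : SimpleGraph V}

namespace Walk

lemma connected_induce_image_getVert_Icc {u v : V} (p : G.Walk u v) {a b : ℕ} (hab : a ≤ b)
    (hb : b ≤ p.length) : (G.induce (p.getVert '' Set.Icc a b)).Connected := by
  have hsupp : p.getVert '' Set.Icc a b = {x | x ∈ ((p.drop a).take (b - a)).support} := by
    ext x
    simp only [Set.mem_image, Set.mem_Icc, Set.mem_ofPred_eq, mem_support_iff_exists_getVert,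
      take_getVert, drop_getVert, take_length, drop_length]
    constructor
    · rintro ⟨i, ⟨hai, hib⟩, rfl⟩
      exact ⟨i - a, by congr 1; omega, by omega⟩
    · rintro ⟨m, rfl, hm⟩
      exact ⟨a + min (b - a) m, by omega, rfl⟩
  rw [hsupp]
  exact connected_induce_support _

lemma IsPath.exists_isCycle_length_eq_add_two {a x y : V} {P : G.Walk x y} (hP : P.IsPath)
    (haP : a ∉ P.support) (hax : G.Adj a x) (hay : G.Adj a y) (hxy : x ≠ y) :
    ∃ c : G.Walk a a, c.IsCycle ∧ c.length = P.length + 2 := by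
  refine ⟨cons hax (P.concat hay.symm),
    (cons_isCycle_iff _ _).mpr ⟨hP.concat haP _, ?_⟩, by simp⟩
  rw [edges_concat, List.concat_eq_append, List.mem_append]
  rintro (h | h)
  · exact haP (P.fst_mem_support_of_mem_edges h)
  · simp only [List.mem_singleton, Sym2.eq_iff] at h
    rcases h with ⟨rfl, -⟩ | ⟨-, rfl⟩
    exacts [hay.ne rfl, hxy rfl]

lemma IsCycle.cycleGraph_isMinorOf {u : V} {p : G.Walk u u} (hp : p.IsCycle) {k : ℕ}
    (hk : k ≤ p.length) : (cycleGraph k).IsMinorOf G := by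
  have hn := hp.three_le_length
  -- the branch set of `j` is the arc `p_j, …, p_(top j)`: a single vertex except for the last one
  let top : Fin k → ℕ := fun j => if j.val + 1 = k then p.length - 1 else j.val
  have htop : ∀ j : Fin k, j.val ≤ top j ∧ top j ≤ p.length - 1 := by
    intro j
    simp only [top]
    split_ifs <;> omega
  let arc : Fin k → Set V := fun j => p.getVert '' Set.Icc j.val (top j)
  have mem_arc : ∀ (j : Fin k) (i : ℕ), j.val ≤ i → i ≤ top j → p.getVert i ∈ arc j :=
    fun j i h₁ h₂ => ⟨i, ⟨h₁, h₂⟩, rfl⟩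
  have adj_arc : ∀ x y : Fin k, y.val = x.val + 1 ∨ (x.val + 1 = k ∧ y.val = 0) →
      ∃ v₁ ∈ arc x, ∃ v₂ ∈ arc y, G.Adj v₁ v₂ := by
    rintro x y (hxy | ⟨hx, hy⟩)
    · have hx : top x = x.val := if_neg (by omega)
      exact ⟨_, mem_arc x x.val le_rfl hx.ge, _, mem_arc y (x.val + 1) hxy.le (by grind),
        p.adj_getVert_succ (by omega)⟩
    · have hx' : top x = p.length - 1 := if_pos hx
      refine ⟨_, mem_arc x (p.length - 1) (by omega) hx'.ge,
        _, mem_arc y 0 hy.le (Nat.zero_le _), ?_⟩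
      have := p.adj_getVert_succ (show p.length - 1 < p.length by omega)
      rw [getVert_zero]
      rwa [Nat.sub_add_cancel (by omega), getVert_length] at this
  refine ⟨arc, fun j => ⟨_, mem_arc j j le_rfl (htop j).1⟩,
    fun j => p.connected_induce_image_getVert_Icc (htop j).1 (by grind), ?_, ?_⟩
  · intro j₁ j₂ hne
    rw [Set.disjoint_left]
    rintro _ ⟨i₁, hi₁, rfl⟩ ⟨i₂, hi₂, heq⟩
    have := hp.getVert_injOn' (by grind) (by grind) heq
    apply hne
    ext
    simp only [top, Set.mem_Icc] at hi₁ hi₂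
    split_ifs at hi₁ hi₂ <;> omega
  · intro x y h
    rcases cycleGraph_adj'.mp h with h | h
    · obtain ⟨v₂, hv₂, v₁, hv₁, hadj⟩ :=
        adj_arc y x (Fin.val_eq_succ_or_of_val_sub_eq_one h)
      exact ⟨v₁, hv₁, v₂, hv₂, hadj.symm⟩
    · exact adj_arc x y (Fin.val_eq_succ_or_of_val_sub_eq_one h)

end Walk

lemma exists_isCycle_four_le_length_of_isPath_of_adj {a b c z : V} (hbc : G.Adj b c)
    (hca : G.Adj c a) (hza : G.Adj z a) (hzb : z ≠ b) (hzc : z ≠ c) {Q : G.Walk z b}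
    (hQ : Q.IsPath) (haQ : a ∉ Q.support) (hcQ : c ∉ Q.support) :
    ∃ (u : V) (C : G.Walk u u), C.IsCycle ∧ 4 ≤ C.length := by
  have haP : a ∉ (Q.concat hbc).support := by
    rw [Walk.support_concat, List.mem_append, List.mem_singleton]
    rintro (h | rfl)
    exacts [haQ h, hca.ne rfl]
  obtain ⟨C, hC, hlen⟩ :=
    (hQ.concat hcQ hbc).exists_isCycle_length_eq_add_two haP hza.symm hca.symm hzc
  have hQ1 : 0 < Q.length := Walk.not_nil_iff_lt_length.mp (Walk.not_nil_of_ne hzb)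
  exact ⟨a, C, hC, by rw [hlen, Walk.length_concat]; omega⟩

namespace TwoConnected

variable [Fintype V]

lemma exists_isPath_notMem_support (h2 : G.TwoConnected) {x y v : V} (hx : x ≠ v)
    (hy : y ≠ v) :
    ∃ p : G.Walk x y, p.IsPath ∧ v ∉ p.support := by
  classical
  obtain ⟨w⟩ := (h2.2 v).preconnected ⟨x, by simp [hx]⟩ ⟨y, by simp [hy]⟩
  let p := w.map (Subgraph.hom _)
  have hvp : v ∉ p.support := by
    rw [Walk.support_map]
    intro hv
    obtain ⟨z, -, hz⟩ := List.mem_map.mp hv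
    exact z.prop.2 (by simpa using hz)
  exact ⟨p.bypass, p.bypass_isPath, fun h => hvp (p.support_bypass_subset_support h)⟩

lemma exists_adj_adj_ne (h2 : G.TwoConnected) (a : V) :
    ∃ x y, G.Adj a x ∧ G.Adj a y ∧ x ≠ y := by
  classical
  have hcard := h2.1
  obtain ⟨b, -, hb⟩ := Finset.exists_mem_notMem_of_card_lt_card
    (s := {a}) (t := Finset.univ) (by rw [Finset.card_singleton, Finset.card_univ]; omega)
  obtain ⟨c, -, hc⟩ := Finset.exists_mem_notMem_of_card_lt_card
    (s := {a, b}) (t := Finset.univ) (by grind [Finset.card_le_two, Finset.card_univ])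
  simp only [Finset.mem_singleton, Finset.mem_insert, not_or] at hb hc
  obtain ⟨p, -, -⟩ := h2.exists_isPath_notMem_support (Ne.symm hc.1) (Ne.symm hc.2)
  have hp : ¬p.Nil := Walk.not_nil_of_ne (Ne.symm hb)
  obtain ⟨w, -, hw⟩ := Finset.exists_mem_notMem_of_card_lt_card
    (s := {a, p.snd}) (t := Finset.univ) (by grind [Finset.card_le_two, Finset.card_univ])
  simp only [Finset.mem_insert, Finset.mem_singleton, not_or] at hw
  obtain ⟨q, -, hq⟩ := h2.exists_isPath_notMem_support (p.adj_snd hp).ne hw.2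
  have hq' : ¬q.Nil := Walk.not_nil_of_ne (Ne.symm hw.1)
  exact ⟨p.snd, q.snd, p.adj_snd hp, q.adj_snd hq',
    fun h => hq (h ▸ q.getVert_mem_support 1)⟩

lemma exists_isCycle_four_le_length_of_adj_triangle (h2 : G.TwoConnected) {a b c z : V}
    (hab : G.Adj a b) (hbc : G.Adj b c) (hca : G.Adj c a) (hza : G.Adj z a) (hzb : z ≠ b)
    (hzc : z ≠ c) :
    ∃ (u : V) (C : G.Walk u u), C.IsCycle ∧ 4 ≤ C.length := by
  classical
  obtain ⟨Q, hQ, haQ⟩ := h2.exists_isPath_notMem_support hza.ne hab.ne.symm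
  by_cases hcQ : c ∈ Q.support
  · exact exists_isCycle_four_le_length_of_isPath_of_adj hbc.symm hab.symm hza hzc hzb
      (hQ.takeUntil hcQ) (fun h => haQ (Q.support_takeUntil_subset_support hcQ h))
      (Walk.endpoint_notMem_support_takeUntil hQ hcQ hbc.ne)
  · exact exists_isCycle_four_le_length_of_isPath_of_adj hbc hca hza hzb hzc hQ haQ hcQ

lemma exists_isCycle_four_le_length_of_triangle (h2 : G.TwoConnected) {a b c w : V}
    (hab : G.Adj a b) (hbc : G.Adj b c) (hca : G.Adj c a) (hwa : w ≠ a) (hwb : w ≠ b)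
    (hwc : w ≠ c) :
    ∃ (u : V) (C : G.Walk u u), C.IsCycle ∧ 4 ≤ C.length := by
  obtain ⟨P, -, -⟩ := h2.exists_isPath_notMem_support hwb hab.ne
  obtain ⟨d, -, ⟨hza, hzb, hzc⟩, ht⟩ :=
    P.exists_boundary_dart {x | x ≠ a ∧ x ≠ b ∧ x ≠ c} ⟨hwa, hwb, hwc⟩ (by simp)
  simp only [Set.mem_ofPred_eq, not_and_or, not_not] at ht
  rcases ht with h | h | h
  · exact h2.exists_isCycle_four_le_length_of_adj_triangle hab hbc hca (h ▸ d.adj) hzb hzc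
  · exact h2.exists_isCycle_four_le_length_of_adj_triangle hbc hca hab (h ▸ d.adj) hzc hza
  · exact h2.exists_isCycle_four_le_length_of_adj_triangle hca hab hbc (h ▸ d.adj) hza hzb

theorem exists_isCycle_four_le_length (h2 : G.TwoConnected) (hcard : 4 ≤ Fintype.card V) :
    ∃ (u : V) (C : G.Walk u u), C.IsCycle ∧ 4 ≤ C.length := by
  classical
  have : Nonempty V := Fintype.card_pos_iff.mp (by omega)
  let a := Classical.arbitrary V
  obtain ⟨x, y, hax, hay, hxy⟩ := h2.exists_adj_adj_ne a
  obtain ⟨P, hP, haP⟩ := h2.exists_isPath_notMem_support hax.ne.symm hay.ne.symm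
  obtain ⟨C, hC, hlen⟩ := hP.exists_isCycle_length_eq_add_two haP hax hay hxy
  by_cases hP2 : 2 ≤ P.length
  · exact ⟨a, C, hC, by omega⟩
  -- otherwise `P` is a single edge and `a x y` is a triangle
  have hP1 : 0 < P.length := Walk.not_nil_iff_lt_length.mp (Walk.not_nil_of_ne hxy)
  have hxy' : G.Adj x y := Walk.adj_of_length_eq_one (p := P) (by omega)
  obtain ⟨w, -, hw⟩ := Finset.exists_mem_notMem_of_card_lt_card
    (s := {a, x, y}) (t := Finset.univ) (by grind [Finset.card_le_three, Finset.card_univ])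
  simp only [Finset.mem_insert, Finset.mem_singleton, not_or] at hw
  exact h2.exists_isCycle_four_le_length_of_triangle hax hxy' hay.symm hw.1 hw.2.1 hw.2.2

end TwoConnected

end SimpleGraph

/-- Every 2-connected graph on at least 4 vertices with no $C_5$-minor contains
$C_4$ as a subgraph. -/
theorem stmt_5 {V : Type*} [Fintype V] (G : SimpleGraph V)
    (h2 : G.TwoConnected) (hcard : 4 ≤ Fintype.card V)
    (hm : ¬ (SimpleGraph.cycleGraph 5).IsMinorOf G) :
    ∃ f : SimpleGraph.cycleGraph 4 →g G, Function.Injective f := by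
  obtain ⟨u, C, hC, hlen⟩ := h2.exists_isCycle_four_le_length hcard
  have hC4 : C.length = 4 := by
    by_contra hne
    exact hm (hC.cycleGraph_isMinorOf (by omega))
  obtain ⟨e⟩ := (cycleGraph_isContained_iff (by norm_num)).mpr ⟨u, C, hC, hC4⟩
  exact ⟨e.toHom, e.injective⟩
end

section
/- A 2-connected graph H is a minor of some fan graph F_n if and only if H consists of a single cycle together with some chords all incident to one common vertex. -/
/-
Backward: such a graph is a spanning subgraph of the fan whose hub is the common vertex.
Forward: in a minor model of `H` in a fan, every branch set avoiding the hub is an interval of the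
path. If no branch set contained the hub, the vertex whose interval starts leftmost would have a
single neighbour, contradicting 2-connectivity. Listing the remaining vertices by the left ends
of their intervals, every edge avoiding the hub joins consecutive vertices, so `H` is a spanning
subgraph of the fan. 2-connectivity then forces every rim edge: a missing path edge would let the
hub separate `H`, and each end of the path has no neighbour besides its path neighbour and the hub.
-/


open SimpleGraph

/-- The fan graph on `m+1` vertices: a path on the vertices `some 0, …, some (m-1)`
plus an apex `none` adjacent to all of them. -/
def fanGraph (m : ℕ) : SimpleGraph (Option (Fin m)) :=
  SimpleGraph.fromRel (fun a b =>
    (a = none ∧ b ≠ none) ∨ (∃ i j : Fin m, a = some i ∧ b = some j ∧ (i : ℕ) + 1 = j))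

namespace SimpleGraph

theorem Copy.isMinorOf {V W : Type*} {H : SimpleGraph W} {G : SimpleGraph V} (φ : Copy H G) :
    H.IsMinorOf G := by
  refine ⟨fun w => {φ w}, fun w => Set.singleton_nonempty _, fun w => ?_, ?_, ?_⟩
  · exact (connected_iff_exists_forall_reachable _).2
      ⟨⟨φ w, rfl⟩, by rintro ⟨_, rfl⟩; rfl⟩
  · exact fun w₁ w₂ hne => Set.disjoint_singleton.2 (φ.injective.ne hne)
  · exact fun w₁ w₂ hadj => ⟨_, rfl, _, rfl, φ.toHom.map_adj hadj⟩

theorem cycleGraph_adj_iff_val {m : ℕ} {a b : Fin m} :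
    (cycleGraph m).Adj a b ↔ a ≠ b ∧ ((a : ℕ) + 1 = b ∨ (b : ℕ) + 1 = a ∨
      (a : ℕ) + 1 = m ∧ (b : ℕ) = 0 ∨ (b : ℕ) + 1 = m ∧ (a : ℕ) = 0) := by
  rw [cycleGraph_adj', Ne, Fin.ext_iff]
  rcases lt_trichotomy a b with hab | rfl | hab
  · rw [Fin.coe_sub_iff_le.2 hab.le, Fin.coe_sub_iff_lt.2 hab]; omega
  · simp [Fin.coe_sub_iff_le.2 le_rfl]
  · rw [Fin.coe_sub_iff_le.2 hab.le, Fin.coe_sub_iff_lt.2 hab]; omega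

end SimpleGraph

open SimpleGraph

/-- `fanGraph k` with hub `0` and path `1, …, k`. -/
def finFanGraph (k : ℕ) : SimpleGraph (Fin (k + 1)) := (fanGraph k).comap (finSuccEquiv k)

theorem finFanGraph_adj {k : ℕ} {a b : Fin (k + 1)} :
    (finFanGraph k).Adj a b ↔ a ≠ b ∧ (a = 0 ∨ b = 0 ∨ (a : ℕ) + 1 = b ∨ (b : ℕ) + 1 = a) := by
  induction a using Fin.cases <;> induction b using Fin.cases <;>
    simp [finFanGraph, fanGraph, Fin.succ_ne_zero, (Fin.succ_ne_zero _).symm]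

theorem finFanGraph_adj_iff_cycleGraph {k : ℕ} {a b : Fin (k + 1)} :
    (finFanGraph k).Adj a b ↔
      a ≠ b ∧ ((cycleGraph (k + 1)).Adj a b ∨ (a : ℕ) = 0 ∨ (b : ℕ) = 0) := by
  simp only [finFanGraph_adj, cycleGraph_adj_iff_val, ne_eq, Fin.ext_iff, Fin.val_zero]
  omega

/-- The hub `none` gets `0` and `some i` gets `i + 1`, as in `finFanGraph`. -/
def fanIndex {n : ℕ} (x : Option (Fin n)) : ℕ := ((finSuccEquiv n).symm x : ℕ)

theorem fanIndex_injective {n : ℕ} : Function.Injective (fanIndex (n := n)) :=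
  fun _ _ h => (finSuccEquiv n).symm.injective (Fin.ext h)

@[simp] theorem fanIndex_eq_zero {n : ℕ} {x : Option (Fin n)} : fanIndex x = 0 ↔ x = none := by
  rw [← fanIndex_injective.eq_iff]; rfl

theorem fanIndex_succ_eq_or {n : ℕ} {x y : Option (Fin n)} (h : (fanGraph n).Adj x y)
    (hx : x ≠ none) (hy : y ≠ none) :
    fanIndex x + 1 = fanIndex y ∨ fanIndex y + 1 = fanIndex x := by
  have : (finFanGraph n).Adj ((finSuccEquiv n).symm x) ((finSuccEquiv n).symm y) := by
    simpa [finFanGraph] using h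
  rw [Ne, ← fanIndex_eq_zero] at hx hy
  simp only [finFanGraph_adj, Fin.ext_iff, Fin.val_zero] at this
  unfold fanIndex at *
  omega

theorem SimpleGraph.Walk.exists_mem_support_eq {V : Type*} {G : SimpleGraph V} (φ : V → ℕ)
    (hφ : ∀ x y, G.Adj x y → φ y ≤ φ x + 1) {x y : V} (p : G.Walk x y) {k : ℕ}
    (hx : φ x ≤ k) (hy : k ≤ φ y) : ∃ z ∈ p.support, φ z = k := by
  induction p with
  | nil => exact ⟨_, by simp, le_antisymm hx hy⟩
  | @cons x z y hxz _ ih =>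
    rcases hx.lt_or_eq with hx | hx
    · obtain ⟨w, hw, hwk⟩ := ih (by have := hφ x z hxz; omega) hy
      exact ⟨w, by simp [hw], hwk⟩
    · exact ⟨x, by simp, hx⟩

theorem ordConnected_fanIndex_image {n : ℕ} {B : Set (Option (Fin n))} (hB : none ∉ B)
    (hc : ((fanGraph n).induce B).Preconnected) : (fanIndex '' B).OrdConnected := by
  refine ⟨?_⟩
  rintro _ ⟨x, hx, rfl⟩ _ ⟨y, hy, rfl⟩ k ⟨hxk, hky⟩
  have hne : ∀ z : B, (z : Option (Fin n)) ≠ none := fun z h => hB (h ▸ z.2)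
  obtain ⟨z, -, rfl⟩ := (hc ⟨x, hx⟩ ⟨y, hy⟩).some.exists_mem_support_eq (fanIndex ∘ Subtype.val)
    (fun u v huv => by
      have := fanIndex_succ_eq_or (by simpa using huv) (hne u) (hne v)
      simp only [Function.comp_apply]; omega) hxk hky
  exact ⟨z, z.2, rfl⟩

theorem Nat.sInf_lt_sInf_of_succ_mem {A B : Set ℕ} (hB : B.OrdConnected) (hAB : Disjoint A B)
    {i : ℕ} (hi : i ∈ A) (hi' : i + 1 ∈ B) : sInf A < sInf B := by
  by_contra! h
  have hBi : sInf B ≤ i := h.trans (Nat.sInf_le hi)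
  exact hAB.ne_of_mem hi (hB.out (Nat.sInf_mem ⟨_, hi'⟩) hi' ⟨hBi, by omega⟩) rfl

theorem Nat.mem_of_sInf_le_of_lt_sInf {A B : Set ℕ} (hA : A.OrdConnected) {i k : ℕ}
    (hi : i ∈ A) (hi' : i + 1 ∈ B) (hk : sInf A ≤ k) (hk' : k < sInf B) : k ∈ A :=
  hA.out (Nat.sInf_mem ⟨i, hi⟩) hi ⟨hk, by have := Nat.sInf_le hi'; omega⟩

theorem Set.OrdConnected.eq_of_succ_notMem {A : Set ℕ} (hA : A.OrdConnected) {i j : ℕ}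
    (hi : i ∈ A) (hj : j ∈ A) (hi' : i + 1 ∉ A) (hj' : j + 1 ∉ A) : i = j := by
  by_contra hij
  rcases Nat.lt_or_gt_of_ne hij with hij | hij
  · exact hi' (hA.out hi hj ⟨by omega, hij⟩)
  · exact hj' (hA.out hj hi ⟨by omega, hij⟩)

theorem exists_equiv_fin_lt_iff {V : Type*} [Fintype V] {m : ℕ} (hm : Fintype.card V = m)
    {key : V → ℕ} (hkey : Function.Injective key) :
    ∃ e : V ≃ Fin m, ∀ u w, e u < e w ↔ key u < key w := by
  let _ : LinearOrder V := LinearOrder.lift' key hkey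
  exact ⟨(Fintype.orderIsoFinOfCardEq V hm).symm.toEquiv,
    fun u w => (Fintype.orderIsoFinOfCardEq V hm).symm.lt_iff_lt⟩

section Ranking

variable {V : Type*} {m : ℕ} {key : V → ℕ} {e : V ≃ Fin m}

theorem val_add_one_eq_of_lt_iff (he : ∀ u w, e u < e w ↔ key u < key w) {u w : V}
    (huw : key u < key w) (hbetween : ∀ v, ¬(key u < key v ∧ key v < key w)) :
    (e u : ℕ) + 1 = e w := by
  have hlt : (e u : ℕ) < e w := (he u w).2 huw
  by_contra hne
  let v := e.symm ⟨e u + 1, by omega⟩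
  have hv : (e v : ℕ) = e u + 1 := by simp [v]
  exact hbetween v ⟨(he u v).1 (by rw [Fin.lt_def]; omega), (he v w).1 (by rw [Fin.lt_def]; omega)⟩

theorem eq_zero_of_lt_iff [NeZero m] (he : ∀ u w, e u < e w ↔ key u < key w) {w₀ : V}
    (hw₀ : ∀ w, key w₀ ≤ key w) : e w₀ = 0 := by
  by_contra hne
  have h := (he (e.symm 0) w₀).1 (by simpa [Fin.pos_iff_ne_zero] using hne)
  exact (hw₀ _).not_gt h

end Ranking

namespace SimpleGraph.TwoConnected

variable {V : Type*} [Fintype V] {H : SimpleGraph V}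

theorem exists_adj_ne (h : H.TwoConnected) {x z : V} (hxz : x ≠ z) : ∃ u, H.Adj x u ∧ u ≠ z := by
  classical
  have hcard : ({x, z} : Finset V).card < (Finset.univ : Finset V).card := by
    have := h.1
    have := Finset.card_le_two (a := x) (b := z)
    rw [Finset.card_univ]
    omega
  obtain ⟨y, -, hy⟩ := Finset.exists_mem_notMem_of_card_lt_card hcard
  simp only [Finset.mem_insert, Finset.mem_singleton, not_or] at hy
  obtain ⟨p⟩ := (h.2 z).preconnected ⟨x, by simp [hxz]⟩ ⟨y, by simp [hy.2]⟩
  have hp : ¬p.Nil := fun hp => hy.1 (congrArg Subtype.val hp.eq).symm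
  obtain ⟨-, hu, hxu⟩ : x ≠ z ∧ (p.snd : V) ≠ z ∧ H.Adj x p.snd := by simpa using p.adj_snd hp
  exact ⟨p.snd, hxu, hu⟩

theorem adj_of_forall_adj (h : H.TwoConnected) {x y z : V} (hxz : x ≠ z)
    (hx : ∀ u, H.Adj x u → u = y ∨ u = z) : H.Adj x y := by
  obtain ⟨u, hxu, huz⟩ := h.exists_adj_ne hxz
  exact (hx u hxu).resolve_right huz ▸ hxu

theorem mem_of_adj_closed (h : H.TwoConnected) {w₀ a b : V} {S : Set V}
    (hS : ∀ x y, H.Adj x y → x ≠ w₀ → y ≠ w₀ → x ∈ S → y ∈ S)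
    (ha : a ∈ S) (ha₀ : a ≠ w₀) (hb₀ : b ≠ w₀) : b ∈ S := by
  obtain ⟨p⟩ := (h.2 w₀).preconnected ⟨a, by simp [ha₀]⟩ ⟨b, by simp [hb₀]⟩
  suffices ∀ x y, (((⊤ : H.Subgraph).deleteVerts {w₀}).coe.Walk x y) → x.1 ∈ S → y.1 ∈ S from
    this _ _ p ha
  intro x y q
  induction q with
  | nil => exact id
  | cons hxy _ ih =>
    obtain ⟨hx, hy, hxy⟩ := by simpa using hxy
    exact fun hxS => ih (hS _ _ hxy hx hy hxS)

end SimpleGraph.TwoConnected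

/-- Branch sets of a minor model of `H` in a fan, with the fan's vertices numbered by `fanIndex`
(hub `0`). -/
structure FanModel {V : Type*} (H : SimpleGraph V) where
  branch : V → Set ℕ
  nonempty : ∀ w, (branch w).Nonempty
  disjoint : Pairwise fun u w => Disjoint (branch u) (branch w)
  ordConnected : ∀ w, 0 ∉ branch w → (branch w).OrdConnected
  exists_succ_mem : ∀ ⦃u w⦄, H.Adj u w → 0 ∉ branch u → 0 ∉ branch w →
    ∃ i, i ∈ branch u ∧ i + 1 ∈ branch w ∨ i ∈ branch w ∧ i + 1 ∈ branch u

theorem SimpleGraph.IsMinorOf.nonempty_fanModel {V : Type*} {H : SimpleGraph V} {n : ℕ}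
    (h : H.IsMinorOf (fanGraph n)) : Nonempty (FanModel H) := by
  obtain ⟨f, hne, hcn, hdisj, hadj⟩ := h
  have hnone : ∀ w, 0 ∉ fanIndex '' f w → none ∉ f w := fun w h hw => h ⟨none, hw, by simp⟩
  refine ⟨⟨fun w => fanIndex '' f w, fun w => (hne w).image _,
    fun u w huw => (Set.disjoint_image_iff fanIndex_injective).2 (hdisj huw),
    fun w hw => ordConnected_fanIndex_image (hnone w hw) (hcn w).preconnected,
    fun u w huw hu hw => ?_⟩⟩
  obtain ⟨x, hx, y, hy, hxy⟩ := hadj huw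
  rcases fanIndex_succ_eq_or hxy (ne_of_mem_of_not_mem hx (hnone u hu))
    (ne_of_mem_of_not_mem hy (hnone w hw)) with h | h
  · exact ⟨_, Or.inl ⟨⟨x, hx, rfl⟩, h ▸ ⟨y, hy, rfl⟩⟩⟩
  · exact ⟨_, Or.inr ⟨⟨y, hy, rfl⟩, h ▸ ⟨x, hx, rfl⟩⟩⟩

namespace FanModel

variable {V : Type*} {H : SimpleGraph V} (M : FanModel H)

noncomputable def key (w : V) : ℕ := sInf (M.branch w)

theorem key_mem (w : V) : M.key w ∈ M.branch w := Nat.sInf_mem (M.nonempty w)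

theorem eq_of_mem_branch {u w : V} {i : ℕ} (hu : i ∈ M.branch u) (hw : i ∈ M.branch w) :
    u = w := by
  by_contra huw
  exact (M.disjoint huw).ne_of_mem hu hw rfl

theorem key_injective : Function.Injective M.key := fun u w h =>
  M.eq_of_mem_branch (M.key_mem u) (h ▸ M.key_mem w)

variable {M}

theorem key_lt_of_succ_mem {u w : V} {i : ℕ} (hw : 0 ∉ M.branch w) (huw : u ≠ w)
    (hi : i ∈ M.branch u) (hi' : i + 1 ∈ M.branch w) : M.key u < M.key w :=
  Nat.sInf_lt_sInf_of_succ_mem (M.ordConnected w hw) (M.disjoint huw) hi hi'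

theorem not_key_between {u w : V} {i : ℕ} (hu : 0 ∉ M.branch u) (hi : i ∈ M.branch u)
    (hi' : i + 1 ∈ M.branch w) (v : V) : ¬(M.key u < M.key v ∧ M.key v < M.key w) := by
  rintro ⟨huv, hvw⟩
  have hv := Nat.mem_of_sInf_le_of_lt_sInf (M.ordConnected u hu) hi hi' huv.le hvw
  obtain rfl := M.eq_of_mem_branch (M.key_mem v) hv
  exact huv.false

variable [Fintype V] (M)

/-- Otherwise all branch sets are intervals, and a vertex whose interval starts leftmost has
all its neighbours' intervals starting right after its own ends: it has only one neighbour. -/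
theorem exists_zero_mem (h : H.TwoConnected) : ∃ w₀, 0 ∈ M.branch w₀ := by
  by_contra! hz
  have : Nontrivial V := Fintype.one_lt_card_iff_nontrivial.1 (by have := h.1; omega)
  obtain ⟨x, hx⟩ := Finite.exists_min M.key
  have hright : ∀ y, H.Adj x y → ∃ i ∈ M.branch x, i + 1 ∈ M.branch y ∧ i + 1 ∉ M.branch x := by
    intro y hxy
    obtain ⟨i, ⟨hi, hi'⟩ | ⟨hi, hi'⟩⟩ := M.exists_succ_mem hxy (hz x) (hz y)
    · exact ⟨i, hi, hi', fun h => hxy.ne (M.eq_of_mem_branch h hi')⟩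
    · exact absurd (hx y) (M.key_lt_of_succ_mem (hz x) hxy.ne.symm hi hi').not_ge
  obtain ⟨z, hzx⟩ := exists_ne x
  obtain ⟨y₁, hxy₁, -⟩ := h.exists_adj_ne hzx.symm
  obtain ⟨y₂, hxy₂, hy₂⟩ := h.exists_adj_ne hxy₁.ne
  obtain ⟨i, hi, hi₁, hi'⟩ := hright y₁ hxy₁
  obtain ⟨j, hj, hj₂, hj'⟩ := hright y₂ hxy₂
  obtain rfl := (M.ordConnected x (hz x)).eq_of_succ_notMem hi hj hi' hj'
  exact hy₂ (M.eq_of_mem_branch hj₂ hi₁)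

theorem exists_equiv_comap_le_finFanGraph (M : FanModel H) (h : H.TwoConnected) {k : ℕ}
    (hk : Fintype.card V = k + 1) : ∃ e : V ≃ Fin (k + 1), H.comap e.symm ≤ finFanGraph k := by
  obtain ⟨w₀, hw₀⟩ := M.exists_zero_mem h
  have hkey₀ : ∀ w, M.key w₀ ≤ M.key w := fun w => (Nat.sInf_le hw₀).trans (Nat.zero_le _)
  obtain ⟨e, he⟩ := exists_equiv_fin_lt_iff hk M.key_injective
  have he₀ : e w₀ = 0 := eq_zero_of_lt_iff he hkey₀
  refine ⟨e, fun a b hab => ?_⟩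
  obtain ⟨u, rfl⟩ := e.surjective a
  obtain ⟨w, rfl⟩ := e.surjective b
  replace hab : H.Adj u w := by simpa using hab
  rw [finFanGraph_adj]
  refine ⟨e.injective.ne hab.ne, ?_⟩
  by_cases hu : u = w₀
  · exact Or.inl (hu ▸ he₀)
  by_cases hw : w = w₀
  · exact Or.inr (Or.inl (hw ▸ he₀))
  have hu' : 0 ∉ M.branch u := fun h => hu (M.eq_of_mem_branch h hw₀)
  have hw' : 0 ∉ M.branch w := fun h => hw (M.eq_of_mem_branch h hw₀)
  obtain ⟨i, ⟨hi, hi'⟩ | ⟨hi, hi'⟩⟩ := M.exists_succ_mem hab hu' hw'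
  · exact Or.inr (Or.inr (Or.inl (val_add_one_eq_of_lt_iff he
      (key_lt_of_succ_mem hw' hab.ne hi hi') (not_key_between hu' hi hi'))))
  · exact Or.inr (Or.inr (Or.inr (val_add_one_eq_of_lt_iff he
      (key_lt_of_succ_mem hu' hab.ne.symm hi hi') (not_key_between hw' hi hi'))))

end FanModel

section SpanningFan

variable {V : Type*} {H : SimpleGraph V} {k : ℕ} {e : V ≃ Fin (k + 1)}

theorem eq_zero_or_consecutive_of_adj (he : H.comap e.symm ≤ finFanGraph k) {x y : V}
    (hxy : H.Adj x y) :
    e x = 0 ∨ e y = 0 ∨ (e x : ℕ) + 1 = e y ∨ (e y : ℕ) + 1 = e x :=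
  (finFanGraph_adj.1 (he (by simpa using hxy))).2

variable [Fintype V]

/-- Otherwise the vertices up to position `a` would be separated from the rest by the hub. -/
theorem adj_symm_of_val_add_one_eq (h : H.TwoConnected) (he : H.comap e.symm ≤ finFanGraph k)
    {a b : Fin (k + 1)} (ha : a ≠ 0) (hab : (a : ℕ) + 1 = b) : H.Adj (e.symm a) (e.symm b) := by
  by_contra hno
  have hb : b ≠ 0 := by rw [Ne, Fin.ext_iff, Fin.val_zero]; omega
  have hS : ∀ x y, H.Adj x y → x ≠ e.symm 0 → y ≠ e.symm 0 →
      (e x : ℕ) ≤ a → (e y : ℕ) ≤ a := by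
    intro x y hxy hx hy hxa
    rw [Ne, Equiv.eq_symm_apply] at hx hy
    rcases eq_zero_or_consecutive_of_adj he hxy with h₀ | h₀ | hxy' | hxy'
    · exact absurd h₀ hx
    · exact absurd h₀ hy
    · by_contra hya
      obtain rfl : x = e.symm a := by rw [Equiv.eq_symm_apply, Fin.ext_iff]; omega
      obtain rfl : y = e.symm b := by rw [Equiv.eq_symm_apply, Fin.ext_iff]; omega
      exact hno hxy
    · omega
  have := h.mem_of_adj_closed (S := {x | (e x : ℕ) ≤ a}) hS (a := e.symm a) (b := e.symm b)
    (by simp) (by simpa using ha) (by simpa using hb)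
  simp only [Set.mem_ofPred_eq, Equiv.apply_symm_apply] at this
  omega

/-- The vertex at position `1` (or `k`) has only the hub and position `2` (or `k - 1`) as
possible neighbours. -/
theorem adj_symm_zero_of_val_eq (h : H.TwoConnected) (he : H.comap e.symm ≤ finFanGraph k)
    (hk : 2 ≤ k) {a : Fin (k + 1)} (ha : (a : ℕ) = 1 ∨ (a : ℕ) = k) : H.Adj (e.symm 0) (e.symm a) := by
  let c : Fin (k + 1) := ⟨if (a : ℕ) = 1 then 2 else k - 1, by split_ifs <;> omega⟩
  have hc : (c : ℕ) = if (a : ℕ) = 1 then 2 else k - 1 := rfl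
  have hac : e.symm a ≠ e.symm c := by
    rw [Ne, e.symm.injective.eq_iff, Fin.ext_iff, hc]
    split_ifs <;> omega
  refine (h.adj_of_forall_adj hac fun u hu => ?_).symm
  rw [Equiv.eq_symm_apply, Equiv.eq_symm_apply, Fin.ext_iff, Fin.ext_iff]
  have := (e u).isLt
  have := eq_zero_or_consecutive_of_adj he hu
  simp only [Equiv.apply_symm_apply, Fin.ext_iff, Fin.val_zero] at this ⊢
  split_ifs at hc <;> omega

theorem cycleGraph_le_comap_of_comap_le_finFanGraph (h : H.TwoConnected)
    (he : H.comap e.symm ≤ finFanGraph k) (hk : 2 ≤ k) : cycleGraph (k + 1) ≤ H.comap e.symm := by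
  have hrim : ∀ a b : Fin (k + 1), (a : ℕ) + 1 = b ∨ (a : ℕ) = k ∧ (b : ℕ) = 0 →
      H.Adj (e.symm a) (e.symm b) := by
    rintro a b (hab | ⟨ha, hb⟩)
    · by_cases ha : a = 0
      · subst ha
        exact adj_symm_zero_of_val_eq h he hk (Or.inl (by simpa using hab.symm))
      · exact adj_symm_of_val_add_one_eq h he ha hab
    · obtain rfl : b = 0 := Fin.ext hb
      exact (adj_symm_zero_of_val_eq h he hk (Or.inr ha)).symm
  intro a b hab
  obtain ⟨-, h₁ | h₁ | h₁ | h₁⟩ := cycleGraph_adj_iff_val.1 hab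
  · exact hrim a b (Or.inl h₁)
  · exact (hrim b a (Or.inl h₁)).symm
  · exact hrim a b (Or.inr ⟨by omega, h₁.2⟩)
  · exact (hrim b a (Or.inr ⟨by omega, h₁.2⟩)).symm

end SpanningFan

/-- A 2-connected graph is a minor of some fan graph iff it consists of a single
cycle together with some chords all incident to one common vertex. -/
theorem stmt_7 {V : Type*} [Fintype V] (H : SimpleGraph V) (h2 : H.TwoConnected) :
    (∃ n : ℕ, H.IsMinorOf (fanGraph n)) ↔
      ∃ m : ℕ, 3 ≤ m ∧ ∃ G' : SimpleGraph (Fin m),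
        SimpleGraph.cycleGraph m ≤ G' ∧
        (∀ a b : Fin m, G'.Adj a b → (SimpleGraph.cycleGraph m).Adj a b ∨ (a : ℕ) = 0 ∨ (b : ℕ) = 0) ∧
        Nonempty (H ≃g G') := by
  constructor
  · rintro ⟨n, hminor⟩
    have h3 := h2.1
    obtain ⟨k, hk⟩ : ∃ k, Fintype.card V = k + 1 := ⟨Fintype.card V - 1, by omega⟩
    obtain ⟨e, he⟩ := hminor.nonempty_fanModel.some.exists_equiv_comap_le_finFanGraph h2 hk
    refine ⟨k + 1, by omega, H.comap e.symm,
      cycleGraph_le_comap_of_comap_le_finFanGraph h2 he (by omega),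
      fun a b hab => (finFanGraph_adj_iff_cycleGraph.1 (he hab)).2, ⟨(Iso.comap e.symm H).symm⟩⟩
  · rintro ⟨m, hm, G', -, hchords, ⟨φ⟩⟩
    obtain ⟨k, rfl⟩ : ∃ k, m = k + 1 := ⟨m - 1, by omega⟩
    have hG' : G' ≤ finFanGraph k := fun a b hab =>
      finFanGraph_adj_iff_cycleGraph.2 ⟨hab.ne, hchords a b hab⟩
    exact ⟨k, ((Iso.comap (finSuccEquiv k) (fanGraph k)).toCopy.comp
      ((Copy.ofLE _ _ hG').comp φ.toCopy)).isMinorOf⟩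
end

section
/- Fix ε ∈ (0,1) and set s = s(n) = ⌈(1−ε) log n / log log log n⌉ and r = r(n) = ⌈2 log s / (ε log log s)⌉. Then as n → ∞, the quantity log n − s log r − (s/r) log(s/r) tends to infinity. -/
/-!
Write `σ = (1 - ε) log n / log log log n`, so that `s ≤ σ + 1`. Since
`r ≥ 2 log s / (ε log log s)` and, for large `s`, `r ≤ log s`, we get
`s log r ≤ s log log s` and `(s/r) log (s/r) ≤ (s/r) log s ≤ (ε/2) s log log s`.
Moreover `s ≤ log n`, so `s log log s ≤ (σ + 1) log log log n = (1 - ε) log n + log log log n`.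
Hence the quantity is at least `ε (1 + ε)/2 · log n - (1 + ε/2) log log log n`, which tends to
infinity because `log log log n = o(log n)`.
-/

open Filter Real Asymptotics

noncomputable def sParam (ε x : ℝ) : ℕ := ⌈(1 - ε) * log x / log (log (log x))⌉₊

noncomputable def rParam (ε x : ℝ) : ℕ := ⌈2 * log x / (ε * log (log x))⌉₊

section rParam

variable {ε x : ℝ}

lemma rParam_le_log (hx1 : 1 ≤ x) (hε0 : 0 < ε) (hε1 : ε ≤ 1) (hx : 4 ≤ ε * log (log x)) :
    (rParam ε x : ℝ) ≤ log x := by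
  have hLL : 4 ≤ log (log x) := by nlinarith
  have hL : 5 ≤ log x := by
    have hL1 : 1 < log x := (log_pos_iff (log_nonneg hx1)).1 (by linarith)
    have := log_le_sub_one_of_pos (one_pos.trans hL1)
    linarith
  have hρ : 2 * log x / (ε * log (log x)) ≤ log x / 2 := by
    rw [div_le_iff₀ (by positivity)]; nlinarith
  have := Nat.ceil_lt_add_one (show 0 ≤ 2 * log x / (ε * log (log x)) by positivity)
  unfold rParam
  linarith

lemma mul_log_rParam_add_le (hx1 : 1 ≤ x) (hε0 : 0 < ε) (hε1 : ε ≤ 1)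
    (hx : 4 ≤ ε * log (log x)) :
    x * log (rParam ε x) + x / rParam ε x * log (x / rParam ε x)
      ≤ (1 + ε / 2) * (x * log (log x)) := by
  have hLL : 0 < log (log x) := by nlinarith
  have hL : 0 < log x := one_pos.trans ((log_pos_iff (log_nonneg hx1)).1 hLL)
  set R : ℝ := (rParam ε x : ℝ)
  set ρ : ℝ := 2 * log x / (ε * log (log x))
  have hρ : 0 < ρ := by positivity
  have hρR : ρ ≤ R := Nat.le_ceil ρ
  have hR1 : 1 ≤ R := Nat.one_le_cast.mpr (Nat.ceil_pos.mpr hρ)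
  have hlogR : log R ≤ log (log x) := log_le_log (by linarith) (rParam_le_log hx1 hε0 hε1 hx)
  have hlogxR : log (x / R) ≤ log x := log_le_log (by positivity) (div_le_self (by linarith) hR1)
  have hxρ : x / ρ * log x = ε / 2 * (x * log (log x)) := by
    simp only [ρ]; field_simp
  calc x * log R + x / R * log (x / R)
      ≤ x * log (log x) + x / ρ * log x := by
        refine add_le_add (by gcongr) ?_
        calc x / R * log (x / R) ≤ x / R * log x := by gcongr
          _ ≤ x / ρ * log x := by gcongr
    _ = (1 + ε / 2) * (x * log (log x)) := by rw [hxρ]; ring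

end rParam

section sParam

variable {ε x : ℝ}

lemma sParam_mul_log_log_le (hε0 : 0 < ε) (hε1 : ε ≤ 1) (hL : 1 ≤ ε * log x)
    (hLLL : 1 ≤ log (log (log x))) (hS : 1 < log (sParam ε x)) :
    (sParam ε x : ℝ) * log (log (sParam ε x)) ≤ (1 - ε) * log x + log (log (log x)) := by
  set S : ℝ := (sParam ε x : ℝ)
  set σ := (1 - ε) * log x / log (log (log x))
  have hL0 : 0 < log x := pos_of_mul_pos_right (by linarith) hε0.le
  have hS0 : 0 < S := one_pos.trans ((log_pos_iff (Nat.cast_nonneg _)).1 (one_pos.trans hS))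
  have hσ0 : 0 ≤ σ := div_nonneg (mul_nonneg (by linarith) hL0.le) (by linarith)
  have hσ : σ ≤ (1 - ε) * log x := div_le_self (mul_nonneg (by linarith) hL0.le) hLLL
  have hSσ : S ≤ σ + 1 := (Nat.ceil_lt_add_one hσ0).le
  have hloglog : log (log S) ≤ log (log (log x)) :=
    log_le_log (by linarith) (log_le_log hS0 (by linarith))
  calc S * log (log S) ≤ (σ + 1) * log (log (log x)) :=
        mul_le_mul hSσ hloglog (log_nonneg hS.le) (by linarith)
    _ = (1 - ε) * log x + log (log (log x)) := by
        simp only [σ]; field_simp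

lemma le_log_sub_mul_log_rParam (hε0 : 0 < ε) (hε1 : ε < 1) (hL : 1 ≤ ε * log x)
    (hLLL : 1 ≤ log (log (log x))) (hS1 : 1 < log (sParam ε x))
    (hS : 4 ≤ ε * log (log (sParam ε x))) :
    ε * (1 + ε) / 2 * log x - (1 + ε / 2) * log (log (log x))
      ≤ log x - (sParam ε x : ℝ) * log (rParam ε (sParam ε x))
        - (sParam ε x : ℝ) / rParam ε (sParam ε x)
          * log ((sParam ε x : ℝ) / rParam ε (sParam ε x)) := by
  have hS_one : (1 : ℝ) ≤ sParam ε x :=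
    ((log_pos_iff (Nat.cast_nonneg _)).1 (one_pos.trans hS1)).le
  have hr := mul_log_rParam_add_le hS_one hε0 hε1.le hS
  have hs := mul_le_mul_of_nonneg_left (sParam_mul_log_log_le hε0 hε1.le hL hLLL hS1)
    (show 0 ≤ 1 + ε / 2 by positivity)
  linarith

end sParam

lemma isLittleO_log_log_log_log : (fun x => log (log (log x))) =o[atTop] log :=
  (isLittleO_log_id_atTop.comp_tendsto (tendsto_log_atTop.comp tendsto_log_atTop)).trans
    (isLittleO_log_id_atTop.comp_tendsto tendsto_log_atTop)

lemma tendsto_mul_log_div_log_log_log {a : ℝ} (ha : 0 < a) :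
    Tendsto (fun x => a * log x / log (log (log x))) atTop atTop := by
  refine tendsto_atTop.2 fun K => ?_
  set M := max K 1
  have hM : 0 < M := lt_of_lt_of_le one_pos (le_max_right _ _)
  filter_upwards [isLittleO_log_log_log_log.bound (div_pos ha hM),
    (tendsto_log_atTop.comp (tendsto_log_atTop.comp tendsto_log_atTop)).eventually_gt_atTop 0,
    tendsto_log_atTop.eventually_gt_atTop 0] with x hbound hLLL hL
  change 0 < log (log (log x)) at hLLL
  rw [norm_of_nonneg hLLL.le, norm_of_nonneg hL.le] at hbound
  calc K ≤ M := le_max_left _ _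
    _ ≤ a * log x / log (log (log x)) := by
        rw [le_div_iff₀ hLLL]
        calc M * log (log (log x)) ≤ M * (a / M * log x) := by gcongr
          _ = a * log x := by field_simp

lemma tendsto_sParam_atTop {ε : ℝ} (hε1 : ε < 1) : Tendsto (sParam ε) atTop atTop :=
  tendsto_nat_ceil_atTop.comp (tendsto_mul_log_div_log_log_log (sub_pos.2 hε1))

lemma tendsto_mul_log_sub_mul_log_log_log {a : ℝ} (ha : 0 < a) (b : ℝ) :
    Tendsto (fun x => a * log x - b * log (log (log x))) atTop atTop := by
  have hequiv : (fun x => a * log x - b * log (log (log x))) ~[atTop] fun x => a * log x :=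
    IsEquivalent.refl.sub_isLittleO
      ((isLittleO_log_log_log_log.const_mul_left b).const_mul_right ha.ne')
  exact hequiv.symm.tendsto_atTop (tendsto_log_atTop.const_mul_atTop ha)

/-- With `s = ⌈(1-ε) log n / log log log n⌉` and `r = ⌈2 log s / (ε log log s)⌉`,
the quantity `log n - s log r - (s/r) log (s/r)` tends to infinity as `n → ∞`. -/
theorem stmt_15 (ε : ℝ) (hε : ε ∈ Set.Ioo (0 : ℝ) 1) (s r : ℕ → ℕ)
    (hs : ∀ n : ℕ, s n = ⌈(1 - ε) * Real.log n / Real.log (Real.log (Real.log n))⌉₊)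
    (hr : ∀ n : ℕ, r n = ⌈2 * Real.log (s n) / (ε * Real.log (Real.log (s n)))⌉₊) :
    Tendsto (fun n : ℕ =>
        Real.log n - (s n : ℝ) * Real.log (r n)
          - ((s n : ℝ) / (r n : ℝ)) * Real.log ((s n : ℝ) / (r n : ℝ)))
      atTop atTop := by
  obtain ⟨hε0, hε1⟩ := hε
  have hsr (n : ℕ) : s n = sParam ε n ∧ r n = rParam ε (sParam ε n) := by
    rw [hr n, hs n]; exact ⟨rfl, rfl⟩
  have hlog : Tendsto (fun x : ℝ => log x) atTop atTop := tendsto_log_atTop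
  have hlogS : Tendsto (fun n : ℕ => log (sParam ε n)) atTop atTop :=
    hlog.comp (tendsto_natCast_atTop_atTop.comp
      ((tendsto_sParam_atTop hε1).comp tendsto_natCast_atTop_atTop))
  have hlogn : Tendsto (fun n : ℕ => log n) atTop atTop := hlog.comp tendsto_natCast_atTop_atTop
  refine tendsto_atTop_mono' _ ?_ ((tendsto_mul_log_sub_mul_log_log_log
    (by positivity : 0 < ε * (1 + ε) / 2) (1 + ε / 2)).comp tendsto_natCast_atTop_atTop)
  filter_upwards [(hlogn.const_mul_atTop hε0).eventually_ge_atTop 1,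
    (hlog.comp (hlog.comp hlogn)).eventually_ge_atTop 1, hlogS.eventually_gt_atTop 1,
    ((hlog.comp hlogS).const_mul_atTop hε0).eventually_ge_atTop 4] with n hL hLLL hS1 hS
  rw [(hsr n).1, (hsr n).2]
  exact le_log_sub_mul_log_rParam hε0 hε1 hL hLLL hS1 hS
end

section
/- The graph F constructed as follows has no cycle of length 2ℓ+1 or greater: take a star with center v_1 and s leaves; partition the leaves into groups, pick a center in each group, iteratively for ℓ−2 rounds subpartition each group and pick new centers, joining each center to the centers of its subgroups, and finally joining the last-level centers to their remaining group members. Equivalently, adding to a star at v_1 a forest on the leaves in which every path has length at most 2(ℓ−1) yields a graph whose longest cycle has length at most 2ℓ. -/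
open SimpleGraph

/-- The star with center `none` and leaf set `W`. -/
def starGraph (W : Type*) : SimpleGraph (Option W) :=
  SimpleGraph.fromRel (fun a _ => a = none)

/-!
A cycle through `none` enters and leaves it along two star edges and is otherwise a path of the
forest `F`, so it has at most `2(ℓ - 1) + 2` edges; a cycle avoiding `none` would be a cycle of
`F`. For the minor: going once around `C_{2ℓ+1}` from the branch set containing `none` (if any),
the other `2ℓ` branch sets form a chain of disjoint connected sets avoiding `none`, through which
a path of length `2ℓ - 1` can be threaded. That path lies in `F`, contradicting the bound
`2(ℓ - 1)`.
-/

namespace SimpleGraph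

variable {V : Type*} {G : SimpleGraph V}

lemma Connected.exists_isPath_of_induce {s : Set V} (h : (G.induce s).Connected)
    {a b : V} (ha : a ∈ s) (hb : b ∈ s) :
    ∃ p : G.Walk a b, p.IsPath ∧ ∀ x ∈ p.support, x ∈ s := by
  classical
  obtain ⟨q⟩ := h ⟨a, ha⟩ ⟨b, hb⟩
  have hsupp : ∀ x ∈ (q.bypass.map (Embedding.induce s).toHom).support, x ∈ s := by
    simp only [Walk.support_map, List.mem_map]
    rintro _ ⟨⟨y, hy⟩, -, rfl⟩
    exact hy
  exact ⟨_, q.bypass_isPath.map Subtype.val_injective, hsupp⟩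

lemma Walk.isPath_append_cons {u v w x : V} {p : G.Walk u v} {q : G.Walk w x} (h : G.Adj v w)
    (hp : p.IsPath) (hq : q.IsPath) (hpq : ∀ y ∈ p.support, y ∉ q.support) :
    (p.append (.cons h q)).IsPath := by
  rw [Walk.isPath_def, Walk.support_append, Walk.support_cons, List.tail_cons]
  exact hp.support_nodup.append hq.support_nodup fun y hyp hyq => hpq y hyp hyq

lemma exists_isPath_of_chain (k : ℕ) {S : ℕ → Set V}
    (hconn : ∀ i ≤ k, (G.induce (S i)).Connected)
    (hdisj : ∀ i ≤ k, ∀ j ≤ k, i ≠ j → Disjoint (S i) (S j))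
    (hadj : ∀ i < k, ∃ a ∈ S i, ∃ b ∈ S (i + 1), G.Adj a b) {a : V} (ha : a ∈ S 0) :
    ∃ v, ∃ p : G.Walk a v,
      p.IsPath ∧ k ≤ p.length ∧ ∀ x ∈ p.support, ∃ i ≤ k, x ∈ S i := by
  induction k generalizing S a with
  | zero => exact ⟨a, .nil, .nil, le_rfl, by simpa using ha⟩
  | succ k ih =>
    obtain ⟨b, hb, c, hc, hbc⟩ := hadj 0 k.succ_pos
    obtain ⟨p, hp, hpS⟩ := (hconn 0 k.succ.zero_le).exists_isPath_of_induce ha hb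
    obtain ⟨v, q, hq, hqlen, hqS⟩ := ih (S := fun i => S (i + 1))
      (fun i hi => hconn (i + 1) (by omega))
      (fun i hi j hj hij => hdisj (i + 1) (by omega) (j + 1) (by omega) (by omega))
      (fun i hi => hadj (i + 1) (by omega)) hc
    refine ⟨v, p.append (.cons hbc q), ?_, ?_, ?_⟩
    · refine Walk.isPath_append_cons hbc hp hq fun x hxp hxq => ?_
      obtain ⟨i, hi, hxi⟩ := hqS x hxq
      exact Set.disjoint_left.mp
        (hdisj 0 (by omega) (i + 1) (by omega) (by omega)) (hpS x hxp) hxi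
    · simp only [Walk.length_append, Walk.length_cons]
      omega
    · intro x hx
      rcases (Walk.mem_support_append_iff _ _).mp hx with hx | hx
      · exact ⟨0, k.succ.zero_le, hpS x hx⟩
      · rcases List.mem_cons.mp hx with rfl | hx
        · exact ⟨0, k.succ.zero_le, hb⟩
        · obtain ⟨i, hi, hxi⟩ := hqS x hx
          exact ⟨i + 1, by omega, hxi⟩

open Fin.NatCast Fin.CommRing in
lemma cycleGraph_adj_add_one {n : ℕ} [NeZero n] (hn : 2 ≤ n) (u : Fin n) :
    (cycleGraph n).Adj (u + 1) u := by
  rw [cycleGraph_adj', add_sub_cancel_left, Fin.val_one', Nat.mod_eq_of_lt (by omega)]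
  exact Or.inl rfl

open Fin.NatCast Fin.CommRing in
lemma IsMinorOf.exists_isPath_avoiding {n : ℕ} (hn : 2 ≤ n) (h : (cycleGraph n).IsMinorOf G)
    (c : V) : ∃ u v, ∃ p : G.Walk u v, p.IsPath ∧ n - 2 ≤ p.length ∧ c ∉ p.support := by
  obtain ⟨f, hne, hconn, hdisj, hadj⟩ := h
  have : NeZero n := ⟨by omega⟩
  obtain ⟨w₀, hw₀⟩ : ∃ w₀ : Fin n, ∀ w, c ∈ f w → w = w₀ := by
    by_cases hc : ∃ w, c ∈ f w
    · obtain ⟨w, hw⟩ := hc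
      exact ⟨w, fun w' hw' => by_contra fun hww => Set.disjoint_left.mp (hdisj hww) hw' hw⟩
    · exact ⟨0, fun w hw => (hc ⟨w, hw⟩).elim⟩
  -- walk once around the cycle starting just after `w₀`
  let S : ℕ → Set V := fun i => f (w₀ + ((i + 1 : ℕ) : Fin n))
  have hS_avoid : ∀ i < n - 1, c ∉ S i := fun i hi hc => by
    have := add_eq_left.mp (hw₀ _ hc)
    rw [Fin.natCast_eq_zero] at this
    exact Nat.not_dvd_of_pos_of_lt i.succ_pos (by omega) this
  have hS_disj : ∀ i ≤ n - 2, ∀ j ≤ n - 2, i ≠ j → Disjoint (S i) (S j) :=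
    fun i hi j hj hij => hdisj fun heq => hij <| by
      have := congrArg Fin.val (add_left_cancel heq)
      rw [Fin.val_cast_of_lt (by omega), Fin.val_cast_of_lt (by omega)] at this
      omega
  have hS_adj : ∀ i < n - 2, ∃ a ∈ S i, ∃ b ∈ S (i + 1), G.Adj a b := fun i _ =>
    hadj <| by
      have h := (cycleGraph_adj_add_one hn (w₀ + ((i + 1 : ℕ) : Fin n))).symm
      rwa [add_assoc, ← Nat.cast_add_one] at h
  obtain ⟨a, ha⟩ := hne (w₀ + ((0 + 1 : ℕ) : Fin n))
  obtain ⟨v, p, hp, hlen, hpS⟩ :=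
    exists_isPath_of_chain (n - 2) (fun i _ => hconn _) hS_disj hS_adj (S := S) ha
  refine ⟨a, v, p, hp, hlen, fun hc => ?_⟩
  obtain ⟨i, hi, hci⟩ := hpS c hc
  exact hS_avoid i (by omega) hci

end SimpleGraph

section Star

variable {W : Type*} {F : SimpleGraph (Option W)}

lemma starGraph_sup_edges_subset {u v : Option W} (p : (_root_.starGraph W ⊔ F).Walk u v)
    (h : none ∉ p.support) : ∀ e ∈ p.edges, e ∈ F.edgeSet := by
  intro e he
  induction e using Sym2.ind with
  | _ x y =>
    have hx := p.fst_mem_support_of_mem_edges he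
    have hy := p.snd_mem_support_of_mem_edges he
    have hxy := p.edges_subset_edgeSet he
    simp only [mem_edgeSet, sup_adj, _root_.starGraph, fromRel_adj] at hxy
    rcases hxy with ⟨-, rfl | rfl⟩ | hF
    · exact (h hx).elim
    · exact (h hy).elim
    · exact hF

lemma starGraph_sup_length_le_of_none_notMem {b : ℕ}
    (hpaths : ∀ (u v : Option W) (p : F.Walk u v), p.IsPath → p.length ≤ b)
    {u v : Option W} {p : (_root_.starGraph W ⊔ F).Walk u v} (hp : p.IsPath)
    (h : none ∉ p.support) : p.length ≤ b :=
  p.length_transfer _ ▸ hpaths _ _ _ (hp.transfer (starGraph_sup_edges_subset p h))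

lemma starGraph_sup_length_le_of_isPath_none {b : ℕ}
    (hpaths : ∀ (u v : Option W) (p : F.Walk u v), p.IsPath → p.length ≤ b)
    {v : Option W} {p : (_root_.starGraph W ⊔ F).Walk none v} (hp : p.IsPath) :
    p.length ≤ b + 1 := by
  cases p with
  | nil => simp
  | cons h q =>
    rw [Walk.cons_isPath_iff] at hp
    rw [Walk.length_cons]
    exact Nat.succ_le_succ (starGraph_sup_length_le_of_none_notMem hpaths hp.1 hp.2)

lemma starGraph_sup_length_le_of_isCycle_none {b : ℕ}
    (hpaths : ∀ (u v : Option W) (p : F.Walk u v), p.IsPath → p.length ≤ b)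
    {c : (_root_.starGraph W ⊔ F).Walk none none} (hc : c.IsCycle) : c.length ≤ b + 2 := by
  cases c with
  | nil => exact (hc.ne_nil rfl).elim
  | cons h p =>
    rw [Walk.cons_isCycle_iff] at hc
    have := starGraph_sup_length_le_of_isPath_none hpaths hc.1.reverse
    rw [Walk.length_reverse] at this
    rw [Walk.length_cons]
    omega

lemma starGraph_sup_length_le_of_isCycle {b : ℕ} (hforest : F.IsAcyclic)
    (hpaths : ∀ (u v : Option W) (p : F.Walk u v), p.IsPath → p.length ≤ b)
    {v : Option W} {c : (_root_.starGraph W ⊔ F).Walk v v} (hc : c.IsCycle) :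
    c.length ≤ b + 2 := by
  classical
  by_cases hv : none ∈ c.support
  · rw [← c.length_rotate none hv]
    exact starGraph_sup_length_le_of_isCycle_none hpaths (hc.rotate hv)
  · exact (hforest _ (hc.transfer (starGraph_sup_edges_subset c hv))).elim

end Star

theorem stmt_18_general {W : Type*} (ℓ : ℕ) (hℓ : 3 ≤ ℓ) (F : SimpleGraph (Option W))
    (hforest : F.IsAcyclic)
    (hpaths : ∀ (u v : Option W) (p : F.Walk u v), p.IsPath → p.length ≤ 2 * (ℓ - 1)) :
    (∀ (v : Option W) (c : (_root_.starGraph W ⊔ F).Walk v v), c.IsCycle → c.length ≤ 2 * ℓ) ∧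
      ¬ (SimpleGraph.cycleGraph (2 * ℓ + 1)).IsMinorOf (_root_.starGraph W ⊔ F) := by
  refine ⟨fun v c hc => ?_, fun hminor => ?_⟩
  · have := starGraph_sup_length_le_of_isCycle hforest hpaths hc
    omega
  · obtain ⟨u, v, p, hp, hlen, hp_none⟩ := hminor.exists_isPath_avoiding (by omega) none
    have := starGraph_sup_length_le_of_none_notMem hpaths hp hp_none
    omega

/-- Adding to a star centered at `none` a forest on the leaves in which every
path has length at most $2(ℓ-1)$ yields a graph whose longest cycle has length
at most $2ℓ$; in particular it has no $C_{2ℓ+1}$-minor. -/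
theorem stmt_18 {W : Type*} (ℓ : ℕ) (hℓ : 3 ≤ ℓ) (F : SimpleGraph (Option W))
    (hnone : ∀ w : Option W, ¬ F.Adj none w)
    (hforest : F.IsAcyclic)
    (hpaths : ∀ (u v : Option W) (p : F.Walk u v), p.IsPath → p.length ≤ 2 * (ℓ - 1)) :
    (∀ (v : Option W) (c : (_root_.starGraph W ⊔ F).Walk v v), c.IsCycle → c.length ≤ 2 * ℓ) ∧
      ¬ (SimpleGraph.cycleGraph (2 * ℓ + 1)).IsMinorOf (_root_.starGraph W ⊔ F) :=
  stmt_18_general ℓ hℓ F hforest hpaths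
end
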